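/- arXiv:1907.03391 — 3 statements merged into one kernel-verified Lean document; each statement's English description precedes it below -/
import Mathlib

section
/- Let β_ε be as above (even, smooth, 0 ≤ β_ε ≤ 1, equal to 1 on [−1/2+ε, 1/2−ε], vanishing outside [−1/2−ε, 1/2+ε], with β_ε(1/2+x) = 1 − β_ε(1/2−x)). Let a > 0 and define η(x) = ∏_{i=1}^n β̂_ε((x_i − k_i)/a) for fixed k ∈ (aℤ)^n, where β̂_ε is the Fourier transform of β_ε. Then for every x ∈ (aℤ)^n, η(x) = 𝟙_{x = k}. -/
open MeasureTheory Real intervalIntegral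

lemma key (ε : ℝ) (hε0 : 0 < ε) (hε : ε < 1/2) (β : ℝ → ℝ)
    (hcont : Continuous β)
    (heven : ∀ ξ, β (-ξ) = β ξ)
    (hone : ∀ ξ, |ξ| ≤ 1/2 - ε → β ξ = 1)
    (hzero : ∀ ξ, 1/2 + ε ≤ |ξ| → β ξ = 0)
    (hsym : ∀ x : ℝ, 0 ≤ x → x < 1/2 → β (1/2 + x) = 1 - β (1/2 - x))
    (m : ℤ) :
    ∫ t : ℝ, (β t : ℂ) * Complex.exp (-(2 * π * Complex.I) * t * m)
      = if m = 0 then 1 else 0 := by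
  have hsupp : ∀ t : ℝ, 1 ≤ |t| → β t = 0 := fun t ht => hzero t (by linarith)
  have psum0 : ∀ t : ℝ, 0 ≤ t → t ≤ 1/2 → β (t - 1) + β t + β (t + 1) = 1 := by
    intro t h0 h1
    have hz1 : β (t + 1) = 0 := hsupp _ (by rw [abs_of_nonneg (by linarith)]; linarith)
    have hev : β (t - 1) = β (1 - t) := by rw [← heven (1 - t)]; ring_nf
    rcases eq_or_lt_of_le h0 with h | h
    · have h0' : β 0 = 1 := hone 0 (by rw [abs_zero]; linarith)
      have h1' : β (1 : ℝ) = 0 := hsupp 1 (by norm_num)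
      rw [← h]; simp only [zero_sub, zero_add]
      rw [show (-1 : ℝ) = -(1:ℝ) by ring, heven 1, h1', h0']; ring
    · have hx : β (1/2 + (1/2 - t)) = 1 - β (1/2 - (1/2 - t)) :=
        hsym (1/2 - t) (by linarith) (by linarith)
      have e1 : (1/2 + (1/2 - t) : ℝ) = 1 - t := by ring
      have e2 : (1/2 - (1/2 - t) : ℝ) = t := by ring
      rw [e1, e2] at hx
      rw [hev, hx, hz1]; ring
  have psum : ∀ t : ℝ, |t| ≤ 1/2 → β (t - 1) + β t + β (t + 1) = 1 := by
    intro t ht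
    rcases le_or_gt 0 t with h | h
    · exact psum0 t h (by rwa [abs_of_nonneg h] at ht)
    · have h' := psum0 (-t) (by linarith) (by rwa [abs_of_neg h] at ht)
      have e1 : β (-t - 1) = β (t + 1) := by rw [← heven (t + 1)]; ring_nf
      have e2 : β (-t + 1) = β (t - 1) := by rw [← heven (-t + 1)]; ring_nf
      rw [e1, heven t, e2] at h'
      linarith
  set f : ℝ → ℂ := fun t => (β t : ℂ) * Complex.exp (-(2 * π * Complex.I) * t * m) with hf
  have hfc : Continuous f := by
    apply Continuous.mul (Complex.continuous_ofReal.comp hcont)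
    exact Complex.continuous_exp.comp (by continuity)
  have hfz : ∀ t : ℝ, 1 ≤ |t| → f t = 0 := by
    intro t ht; simp [hf, hsupp t ht]
  have hcs : HasCompactSupport f :=
    HasCompactSupport.intro (isCompact_Icc (a := (-1:ℝ)) (b := 1))
      (fun t ht => hfz t (by by_contra h; push_neg at h; exact ht (abs_le.mp h.le)))
  have hint : Integrable f := hfc.integrable_of_hasCompactSupport hcs
  -- reduce to an interval integral
  have h1 : ∫ t : ℝ, f t = ∫ t in Set.Ioc (-(3/2) : ℝ) (3/2), f t := by
    refine (setIntegral_eq_integral_of_forall_compl_eq_zero ?_).symm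
    intro t ht
    refine hfz t ?_
    simp only [Set.mem_Ioc, not_and_or, not_lt, not_le] at ht
    rcases ht with h | h
    · rw [abs_of_nonpos (by linarith)]; linarith
    · rw [abs_of_nonneg (by linarith)]; linarith
  have h2 : ∫ t in Set.Ioc (-(3/2) : ℝ) (3/2), f t = ∫ t in (-(3/2) : ℝ)..(3/2), f t := by
    rw [intervalIntegral.integral_of_le (by norm_num)]
  -- shift identities
  have hexp1 : ∀ (t : ℝ) (j : ℤ),
      Complex.exp (-(2 * π * Complex.I) * (t + j) * m) =
        Complex.exp (-(2 * π * Complex.I) * t * m) := by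
    intro t j
    have : (-(2 * π * Complex.I) * (t + j) * m : ℂ)
        = -(2 * π * Complex.I) * t * m + (-(j * m) : ℤ) * (2 * π * Complex.I) := by
      push_cast; ring
    rw [this, Complex.exp_add, Complex.exp_int_mul_two_pi_mul_I, mul_one]
  have hshift : ∀ (t : ℝ) (j : ℤ),
      f (t + j) = (β (t + j) : ℂ) * Complex.exp (-(2 * π * Complex.I) * t * m) := by
    intro t j; simp only [hf]; push_cast; rw [hexp1]
  have hii : ∀ u v : ℝ, IntervalIntegrable f volume u v := fun u v =>
    hint.intervalIntegrable
  -- split and shift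
  have hsplit : ∫ t in (-(3/2) : ℝ)..(3/2), f t =
      (∫ t in (-(3/2) : ℝ)..(-(1/2)), f t) + (∫ t in (-(1/2) : ℝ)..(1/2), f t)
        + ∫ t in ((1/2) : ℝ)..(3/2), f t := by
    rw [integral_add_adjacent_intervals (hii _ _) (hii _ _),
      integral_add_adjacent_intervals (hii _ _) (hii _ _)]
  have hR : ∫ t in ((1/2) : ℝ)..(3/2), f t = ∫ t in (-(1/2) : ℝ)..(1/2), f (t + 1) := by
    rw [intervalIntegral.integral_comp_add_right f 1]
    norm_num
  have hL : ∫ t in (-(3/2) : ℝ)..(-(1/2)), f t = ∫ t in (-(1/2) : ℝ)..(1/2), f (t + (-1)) := by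
    rw [intervalIntegral.integral_comp_add_right f (-1)]
    norm_num
  have hiM : IntervalIntegrable f volume (-(1/2)) (1/2) := hii _ _
  have hiL : IntervalIntegrable (fun t => f (t + (-1:ℝ))) volume (-(1/2)) (1/2) :=
    (hfc.comp (continuous_add_right _)).intervalIntegrable _ _
  have hiR : IntervalIntegrable (fun t => f (t + (1:ℝ))) volume (-(1/2)) (1/2) :=
    (hfc.comp (continuous_add_right _)).intervalIntegrable _ _
  have hsum : ∫ t in (-(3/2) : ℝ)..(3/2), f t =
      ∫ t in (-(1/2) : ℝ)..(1/2), Complex.exp (-(2 * π * Complex.I) * t * m) := by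
    rw [hsplit, hR, hL, ← intervalIntegral.integral_add hiL hiM,
      ← intervalIntegral.integral_add (hiL.add hiM) hiR]
    apply intervalIntegral.integral_congr
    intro t ht
    rw [Set.uIcc_of_le (by norm_num)] at ht
    have habs : |t| ≤ 1/2 := abs_le.mpr ⟨by linarith [ht.1], ht.2⟩
    have e1 := hshift t (-1)
    have e2 := hshift t 1
    push_cast at e1 e2
    show f (t + -1) + f t + f (t + 1) = Complex.exp (-(2 * ↑π * Complex.I) * ↑t * ↑m)
    rw [e1, e2]; simp only [hf]
    rw [← add_mul, ← add_mul]
    have : ((β (t + -1) : ℂ) + β t + β (t + 1)) = 1 := by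
      have := psum t habs
      push_cast [show t + -1 = t - 1 by ring]
      exact_mod_cast congrArg (Complex.ofReal) this
    rw [this, one_mul]
  rw [h1, h2, hsum]
  by_cases hm : m = 0
  · subst hm
    simp only [Int.cast_zero, mul_zero, Complex.exp_zero]
    rw [intervalIntegral.integral_const]
    norm_num
  · have hc : (-(2 * π * Complex.I) * m : ℂ) ≠ 0 := by
      simp [Real.pi_ne_zero, Complex.I_ne_zero, hm]
    have : ∀ t : ℝ, (-(2 * π * Complex.I) * t * m : ℂ) = (-(2 * π * Complex.I) * m) * t := by
      intro t; ring
    simp_rw [this]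
    rw [integral_exp_mul_complex hc]
    have : Complex.exp (-(2 * π * Complex.I) * m * (1/2 : ℝ))
        = Complex.exp (-(2 * π * Complex.I) * m * (-(1/2) : ℝ)) := by
      have e : (-(2 * π * Complex.I) * m * (1/2 : ℝ) : ℂ)
          = -(2 * π * Complex.I) * m * (-(1/2) : ℝ) + (-m : ℤ) * (2 * π * Complex.I) := by
        push_cast; ring
      rw [e, Complex.exp_add, Complex.exp_int_mul_two_pi_mul_I, mul_one]
    rw [this, if_neg hm]
    simp

/-- with `β_ε` a bump function as in the paper and
`η(x) = ∏ β̂_ε((x_i - k_i)/a)`, for every lattice point `x ∈ (aℤ)^n` one has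
`η(x) = 𝟙_{x = k}`.  Lattice points are written as `fun i => a * x i` with
`x : Fin n → ℤ`. -/
theorem stmt2 (ε : ℝ) (hε0 : 0 < ε) (hε : ε < 1/2) (β : ℝ → ℝ)
    (hsmooth : ContDiff ℝ (⊤ : ℕ∞) β)
    (heven : ∀ ξ, β (-ξ) = β ξ)
    (hrange : ∀ ξ, 0 ≤ β ξ ∧ β ξ ≤ 1)
    (hone : ∀ ξ, |ξ| ≤ 1/2 - ε → β ξ = 1)
    (hzero : ∀ ξ, 1/2 + ε ≤ |ξ| → β ξ = 0)
    (hsym : ∀ x : ℝ, 0 ≤ x → x < 1/2 → β (1/2 + x) = 1 - β (1/2 - x))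
    (a : ℝ) (ha : 0 < a) (n : ℕ) (k x : Fin n → ℤ) :
    (∏ i : Fin n,
        ∫ t : ℝ, (β t : ℂ) *
          Complex.exp (-(2 * π * Complex.I) * t * ((a * x i - a * k i) / a)))
      = if x = k then 1 else 0 := by
  have ha' : (a : ℂ) ≠ 0 := by exact_mod_cast ha.ne'
  have hfac : ∀ i : Fin n,
      (∫ t : ℝ, (β t : ℂ) *
          Complex.exp (-(2 * π * Complex.I) * t * ((a * x i - a * k i) / a)))
        = if x i = k i then 1 else 0 := by
    intro i
    have e : ((a : ℂ) * ((x i : ℤ) : ℂ) - (a : ℂ) * ((k i : ℤ) : ℂ)) / (a : ℂ)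
        = (((x i - k i : ℤ)) : ℂ) := by
      field_simp
      push_cast
      ring
    rw [e, key ε hε0 hε β hsmooth.continuous heven hone hzero hsym (x i - k i)]
    simp [sub_eq_zero]
  rw [Finset.prod_congr rfl fun i _ => hfac i, Finset.prod_boole]
  simp [funext_iff]
end

section
/- Let S(x) = sin(πx)/(πx) (with S(0)=1). For g(x) = η(x)·det_{n×n}[S(x_i − x_j)] with η Schwartz on ℝ^n, the Fourier transform of g satisfies ĝ(y) = Σ_{σ ∈ 𝔖_n} sgn(σ) ∫_{[−1/2,1/2]^n} η̂(y_1 − (ξ_1 − ξ_{σ^{−1}(1)}), ..., y_n − (ξ_n − ξ_{σ^{−1}(n)})) dξ. -/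
/-!
Expand the determinant by Leibniz: the term of `σ` carries `∏ⱼ S(x_{σ j} - x_j)`. Since `S` is the
Fourier transform of the indicator of `[-1/2, 1/2]`, this product is the integral over the cube
`[-1/2, 1/2]^n` of `e^{-2πi Σⱼ (x_{σ j} - x_j) ξⱼ}`, and `Σⱼ (x_{σ j} - x_j) ξⱼ = -x · (ξ - ξ ∘ σ⁻¹)`.
As `η` is integrable, the cube has finite measure and the phase is unimodular, Fubini lets the
`x`- and `ξ`-integrals be exchanged.
-/

open MeasureTheory Real

/-- The normalized sinc function `S(x) = sin(πx)/(πx)`, `S(0) = 1`. -/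
noncomputable def sinc (x : ℝ) : ℝ := if x = 0 then 1 else Real.sin (π * x) / (π * x)

lemma setIntegral_Icc_cexp_eq_sinc (a : ℝ) :
    ∫ t in Set.Icc (-(1:ℝ)/2) (1/2), Complex.exp (-(2 * π * Complex.I) * (a * t)) =
      _root_.sinc a := by
  rw [integral_Icc_eq_integral_Ioc, ← intervalIntegral.integral_of_le (by norm_num)]
  rcases eq_or_ne a 0 with rfl | ha
  · norm_num [_root_.sinc]
  have hz : (π * a : ℂ) ≠ 0 := by simp [Real.pi_ne_zero, ha]
  have hc : -(2 * π * Complex.I) * a = -2 * Complex.I * (π * a) := by ring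
  simp_rw [← mul_assoc, hc]
  rw [integral_exp_mul_complex (by simpa using hz), _root_.sinc, if_neg (by simpa using hz)]
  push_cast
  generalize (π * a : ℂ) = z at hz ⊢
  rw [show -2 * Complex.I * z * (1 / 2) = -z * Complex.I by ring,
    show -2 * Complex.I * z * (-1 / 2) = z * Complex.I by ring,
    div_eq_div_iff (by simpa using hz) hz]
  linear_combination (Complex.I * z) * Complex.two_sin z
    + (z * (Complex.exp (-z * Complex.I) - Complex.exp (z * Complex.I))) * Complex.I_mul_I

def centeredUnitCube (ι : Type*) : Set (ι → ℝ) := Set.univ.pi fun _ => Set.Icc (-(1:ℝ)/2) (1/2)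

section

variable {ι : Type*} [Fintype ι]

instance : IsFiniteMeasure (volume.restrict (centeredUnitCube ι)) :=
  isFiniteMeasure_restrict.2 (isCompact_univ_pi fun _ => isCompact_Icc).measure_ne_top

lemma setIntegral_centeredUnitCube_cexp_sum_mul_eq_prod_sinc (a : ι → ℝ) :
    ∫ ξ in centeredUnitCube ι, Complex.exp (-(2 * π * Complex.I) * ∑ j, a j * ξ j) =
      ∏ j, (_root_.sinc (a j) : ℂ) := by
  push_cast
  simp_rw [Finset.mul_sum, Complex.exp_sum]
  rw [centeredUnitCube, volume_pi, Measure.restrict_pi_pi,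
    integral_fintype_prod_eq_prod fun j (t : ℝ) => Complex.exp (-(2 * π * Complex.I) * (a j * t))]
  simp_rw [setIntegral_Icc_cexp_eq_sinc]

lemma sum_mul_sub_sub_perm_inv {R : Type*} [CommRing R] (σ : Equiv.Perm ι) (x y ξ : ι → R) :
    ∑ i, x i * (y i - (ξ i - ξ (σ⁻¹ i))) = ∑ i, x i * y i + ∑ j, (x (σ j) - x j) * ξ j := by
  have hσ : ∑ i, x i * ξ (σ⁻¹ i) = ∑ j, x (σ j) * ξ j := by
    simpa using (Equiv.sum_comp σ fun i => x i * ξ (σ⁻¹ i)).symm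
  simp only [mul_sub, sub_mul, Finset.sum_sub_distrib, hσ]
  ring

lemma setIntegral_centeredUnitCube_cexp_perm_eq_mul_prod_sinc (σ : Equiv.Perm ι) (x y : ι → ℝ) :
    ∫ ξ in centeredUnitCube ι,
        Complex.exp (-(2 * π * Complex.I) * ∑ i, x i * (y i - (ξ i - ξ (σ⁻¹ i)))) =
      Complex.exp (-(2 * π * Complex.I) * ∑ i, x i * y i) *
        ∏ j, (_root_.sinc (x (σ j) - x j) : ℂ) := by
  simp_rw [sum_mul_sub_sub_perm_inv σ, Complex.ofReal_add, mul_add, Complex.exp_add]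
  rw [integral_const_mul, setIntegral_centeredUnitCube_cexp_sum_mul_eq_prod_sinc]

lemma integrable_prod_centeredUnitCube_mul_cexp {f : (ι → ℝ) → ℂ} (hf : Integrable f)
    (σ : Equiv.Perm ι) (y : ι → ℝ) :
    Integrable (Function.uncurry fun x ξ : ι → ℝ =>
        f x * Complex.exp (-(2 * π * Complex.I) * ∑ i, x i * (y i - (ξ i - ξ (σ⁻¹ i)))))
      (volume.prod (volume.restrict (centeredUnitCube ι))) := by
  refine (hf.comp_fst _).mul_bdd (c := 1) (by fun_prop) (ae_of_all _ fun p => ?_)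
  simp [Complex.norm_exp]

end

/-- for `g(x) = η(x)·det[S(x_i - x_j)]` with `η` Schwartz on `ℝ^n`,
`ĝ(y) = Σ_{σ ∈ 𝔖_n} sgn(σ) ∫_{[-1/2,1/2]^n} η̂(y - (ξ - ξ∘σ⁻¹)) dξ`. -/
theorem stmt6 (n : ℕ) (η : SchwartzMap (Fin n → ℝ) ℂ) (y : Fin n → ℝ) :
    (∫ x : Fin n → ℝ,
        (η x * Matrix.det (Matrix.of fun i j : Fin n => (_root_.sinc (x i - x j) : ℂ)))
          * Complex.exp (-(2 * π * Complex.I) * ∑ i, x i * y i))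
      = ∑ σ : Equiv.Perm (Fin n),
          ((Equiv.Perm.sign σ : ℤ) : ℂ) *
            ∫ ξ in (Set.univ.pi fun _ : Fin n => Set.Icc (-(1:ℝ)/2) (1/2)),
              ∫ x : Fin n → ℝ,
                η x * Complex.exp (-(2 * π * Complex.I) *
                  ∑ i, x i * (y i - (ξ i - ξ (σ⁻¹ i)))) := by
  have hint := (integrable_prod_centeredUnitCube_mul_cexp η.integrable · y)
  have hleibniz : ∀ x : Fin n → ℝ,
      η x * Matrix.det (Matrix.of fun i j : Fin n => (_root_.sinc (x i - x j) : ℂ)) *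
          Complex.exp (-(2 * π * Complex.I) * ∑ i, x i * y i) =
        ∑ σ : Equiv.Perm (Fin n), ((Equiv.Perm.sign σ : ℤ) : ℂ) *
          ∫ ξ in centeredUnitCube (Fin n), η x * Complex.exp (-(2 * π * Complex.I) *
            ∑ i, x i * (y i - (ξ i - ξ (σ⁻¹ i)))) := by
    intro x
    simp_rw [integral_const_mul, setIntegral_centeredUnitCube_cexp_perm_eq_mul_prod_sinc,
      Matrix.det_apply, Matrix.of_apply, Finset.mul_sum, Finset.sum_mul, Units.smul_def,
      zsmul_eq_mul]
    exact Finset.sum_congr rfl fun σ _ => by ring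
  simp_rw [hleibniz]
  rw [integral_finsetSum _ fun σ _ => ?_]
  swap
  · exact (hint σ).integral_prod_left.const_mul _
  refine Finset.sum_congr rfl fun σ _ => ?_
  rw [integral_const_mul, integral_integral_swap (hint σ), centeredUnitCube]
end

section
/- Define f_3(r) = ∫_{[−1/2,1/2]^3} 𝟙_{|ξ_1−ξ_2|≤r} 𝟙_{|ξ_2−ξ_3|≤r} 𝟙_{|ξ_3−ξ_1|≤r} dξ_1 dξ_2 dξ_3. Then f_3(r) = 3r^2 − 2r^3 for 0 < r < 1 and f_3(r) = 1 for r ≥ 1. -/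
/-!
Almost surely the coordinates of `ξ` are pairwise distinct, so exactly one of them is the
minimum. Hence the event that all pairwise distances are at most `r` is, up to a null set, the
disjoint union over `i` of the events that every `ξ j` lies in `[ξ i, ξ i + r]`. Given `ξ i` the
other coordinates are independent, so for `n + 1` i.i.d. coordinates with an atomless law `μ` the
probability is `(n + 1) ∫ μ [x, x + r] ^ n dμ(x)`. For the uniform law on `[-1/2, 1/2]` and
`n = 2` this is `3 ∫₀¹ min(r, u)² du = 3 s² - 2 s³` with `s = min r 1`.
-/

open MeasureTheory Set Function

section PiMeasure

variable {n : ℕ} (μ : Measure ℝ) [SigmaFinite μ]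

theorem pi_preimage_piFinSuccAbove (i : Fin (n + 1)) {s : Set (ℝ × (Fin n → ℝ))}
    (hs : MeasurableSet s) :
    Measure.pi (fun _ => μ) (MeasurableEquiv.piFinSuccAbove (fun _ => ℝ) i ⁻¹' s)
      = ∫⁻ x, Measure.pi (fun _ => μ) (Prod.mk x ⁻¹' s) ∂μ := by
  rw [(measurePreserving_piFinSuccAbove (fun _ => μ) i).measure_preimage hs.nullMeasurableSet,
    Measure.prod_apply hs]

theorem pi_setOf_eq_null [NullSingletonClass μ] {i j : Fin (n + 1)} (hij : i ≠ j) :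
    Measure.pi (fun _ => μ) {ξ | ξ i = ξ j} = 0 := by
  obtain ⟨k, rfl⟩ := Fin.exists_succAbove_eq hij.symm
  have hs : MeasurableSet {p : ℝ × (Fin n → ℝ) | p.1 = p.2 k} :=
    measurableSet_eq_fun measurable_fst ((measurable_pi_apply k).comp measurable_snd)
  have hslice (x : ℝ) : Prod.mk x ⁻¹' {p : ℝ × (Fin n → ℝ) | p.1 = p.2 k} = {η | η k = x} :=
    ext fun _ => eq_comm
  refine (pi_preimage_piFinSuccAbove μ i hs).trans ?_
  simp only [hslice, Measure.pi_hyperplane, lintegral_zero]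

theorem pi_setOf_forall_mem_Icc (i : Fin (n + 1)) {r : ℝ} (hr : 0 ≤ r) :
    Measure.pi (fun _ => μ) {ξ | ∀ j, ξ j ∈ Icc (ξ i) (ξ i + r)}
      = ∫⁻ x, μ (Icc x (x + r)) ^ n ∂μ := by
  have hs : MeasurableSet {p : ℝ × (Fin n → ℝ) | ∀ k, p.2 k ∈ Icc p.1 (p.1 + r)} := by
    measurability
  have hset : {ξ : Fin (n + 1) → ℝ | ∀ j, ξ j ∈ Icc (ξ i) (ξ i + r)} =
      MeasurableEquiv.piFinSuccAbove (fun _ => ℝ) i ⁻¹'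
        {p : ℝ × (Fin n → ℝ) | ∀ k, p.2 k ∈ Icc p.1 (p.1 + r)} := by
    ext ξ
    simp [Fin.forall_iff_succAbove i, Fin.removeNth_apply, hr]
  have hslice (x : ℝ) : Prod.mk x ⁻¹' {p : ℝ × (Fin n → ℝ) | ∀ k, p.2 k ∈ Icc p.1 (p.1 + r)}
      = univ.pi fun _ => Icc x (x + r) := by
    ext; simp only [mem_preimage, mem_ofPred_eq, mem_univ_pi]
  rw [hset, pi_preimage_piFinSuccAbove μ i hs]
  simp only [hslice, Measure.pi_pi, Finset.prod_const, Finset.card_univ, Fintype.card_fin]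

theorem setOf_forall_abs_sub_le_eq_iUnion (r : ℝ) :
    {ξ : Fin (n + 1) → ℝ | ∀ i j, |ξ i - ξ j| ≤ r}
      = ⋃ i, {ξ | ∀ j, ξ j ∈ Icc (ξ i) (ξ i + r)} := by
  ext ξ
  simp only [mem_ofPred_eq, mem_iUnion, mem_Icc]
  constructor
  · intro h
    obtain ⟨i, hi⟩ := Finite.exists_min ξ
    exact ⟨i, fun j => ⟨hi j, by linarith [le_abs_self (ξ j - ξ i), h j i]⟩⟩
  · rintro ⟨i, hi⟩ j k
    rw [abs_sub_le_iff]
    constructor <;> linarith [hi j, hi k]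

theorem pi_setOf_forall_abs_sub_le [NullSingletonClass μ] {r : ℝ} (hr : 0 ≤ r) :
    Measure.pi (fun _ => μ) {ξ : Fin (n + 1) → ℝ | ∀ i j, |ξ i - ξ j| ≤ r}
      = (n + 1) * ∫⁻ x, μ (Icc x (x + r)) ^ n ∂μ := by
  have hdisj : Pairwise (AEDisjoint (Measure.pi fun _ => μ) on
      fun i : Fin (n + 1) => {ξ | ∀ j, ξ j ∈ Icc (ξ i) (ξ i + r)}) := fun i j hij =>
    measure_mono_null (fun ξ hξ => le_antisymm (hξ.1 j).1 (hξ.2 i).1) (pi_setOf_eq_null μ hij)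
  have hmeas (i : Fin (n + 1)) :
      NullMeasurableSet {ξ : Fin (n + 1) → ℝ | ∀ j, ξ j ∈ Icc (ξ i) (ξ i + r)}
        (Measure.pi fun _ => μ) := by
    measurability
  rw [setOf_forall_abs_sub_le_eq_iUnion, measure_iUnion₀ hdisj hmeas, tsum_fintype]
  simp only [pi_setOf_forall_mem_Icc μ _ hr, Finset.sum_const, Finset.card_univ,
    Fintype.card_fin, nsmul_eq_mul, Nat.cast_add, Nat.cast_one]
end PiMeasure

theorem integral_min_sq_of_le_one {s : ℝ} (hs0 : 0 ≤ s) (hs1 : s ≤ 1) :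
    ∫ u in (0 : ℝ)..1, min s u ^ 2 = s ^ 2 - 2 * s ^ 3 / 3 := by
  have hint (a b : ℝ) : IntervalIntegrable (fun u => min s u ^ 2) volume a b :=
    (by fun_prop : Continuous fun u => min s u ^ 2).intervalIntegrable a b
  rw [← intervalIntegral.integral_add_adjacent_intervals (hint 0 s) (hint s 1)]
  have below : ∫ u in (0 : ℝ)..s, min s u ^ 2 = ∫ u in (0 : ℝ)..s, u ^ 2 :=
    intervalIntegral.integral_congr fun u hu => by
      rw [uIcc_of_le hs0] at hu
      rw [min_eq_right hu.2]
  have above : ∫ u in s..1, min s u ^ 2 = ∫ _ in s..1, s ^ 2 :=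
    intervalIntegral.integral_congr fun u hu => by
      rw [uIcc_of_le hs1] at hu
      rw [min_eq_left hu.1]
  rw [below, above, integral_pow, intervalIntegral.integral_const, smul_eq_mul]
  ring

theorem integral_min_sq {r : ℝ} (hr : 0 ≤ r) :
    ∫ u in (0 : ℝ)..1, min r u ^ 2 = min r 1 ^ 2 - 2 * min r 1 ^ 3 / 3 := by
  rw [← integral_min_sq_of_le_one (le_min hr zero_le_one) (min_le_right r 1)]
  refine intervalIntegral.integral_congr fun u hu => ?_
  rw [uIcc_of_le zero_le_one] at hu
  simp only [min_assoc, min_eq_right hu.2]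

theorem volume_restrict_Icc_Icc {a b x r : ℝ} (hx : x ∈ Icc a b) :
    volume.restrict (Icc a b) (Icc x (x + r)) = ENNReal.ofReal (min r (b - x)) := by
  rw [Measure.restrict_apply measurableSet_Icc, Icc_inter_Icc, Real.volume_Icc,
    max_eq_left hx.1, ← min_sub_sub_right, add_sub_cancel_left]

theorem lintegral_volume_restrict_Icc_sq {r : ℝ} (hr : 0 ≤ r) :
    ∫⁻ x, volume.restrict (Icc (-(1:ℝ)/2) (1/2)) (Icc x (x + r)) ^ 2
        ∂volume.restrict (Icc (-(1:ℝ)/2) (1/2))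
      = ENNReal.ofReal (min r 1 ^ 2 - 2 * min r 1 ^ 3 / 3) := by
  have hcont : Continuous fun x : ℝ => min r (1/2 - x) ^ 2 := by fun_prop
  rw [setLIntegral_congr_fun measurableSet_Icc (g := fun x => ENNReal.ofReal (min r (1/2 - x) ^ 2))
      fun x hx => by
        rw [volume_restrict_Icc_Icc hx, ← ENNReal.ofReal_pow (le_min hr (by linarith [hx.2]))],
    ← ofReal_integral_eq_lintegral_ofReal (hcont.integrableOn_Icc) ?_, integral_Icc_eq_integral_Ioc,
    ← intervalIntegral.integral_of_le (by norm_num),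
    intervalIntegral.integral_comp_sub_left (fun u => min r u ^ 2)]
  · norm_num [integral_min_sq hr]
  · exact ae_of_all _ fun x => sq_nonneg _

theorem forall_abs_sub_le_fin_three {r : ℝ} (ξ : Fin 3 → ℝ) :
    (∀ i j, |ξ i - ξ j| ≤ r) ↔ |ξ 0 - ξ 1| ≤ r ∧ |ξ 1 - ξ 2| ≤ r ∧ |ξ 2 - ξ 0| ≤ r := by
  refine ⟨fun h => ⟨h 0 1, h 1 2, h 2 0⟩, fun ⟨h01, h12, h20⟩ i j => ?_⟩
  have hr : 0 ≤ r := (abs_nonneg _).trans h01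
  fin_cases i <;> fin_cases j <;>
    simp [hr, h01, h12, h20, abs_sub_comm (ξ 1) (ξ 0), abs_sub_comm (ξ 2) (ξ 1),
      abs_sub_comm (ξ 0) (ξ 2)]

theorem ite_mul_ite_mul_ite_eq_indicator (r : ℝ) (ξ : Fin 3 → ℝ) :
    (if |ξ 0 - ξ 1| ≤ r then (1:ℝ) else 0) * (if |ξ 1 - ξ 2| ≤ r then (1:ℝ) else 0)
      * (if |ξ 2 - ξ 0| ≤ r then (1:ℝ) else 0)
      = {ξ : Fin 3 → ℝ | ∀ i j, |ξ i - ξ j| ≤ r}.indicator 1 ξ := by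
  simp only [ite_zero_mul_ite_zero, indicator_apply, mem_ofPred_eq, forall_abs_sub_le_fin_three,
    and_assoc, mul_one, Pi.one_apply]

theorem integral_cube_ite_mul_ite_mul_ite {r : ℝ} (hr : 0 ≤ r) :
    (∫ ξ in (Set.univ.pi fun _ : Fin 3 => Set.Icc (-(1:ℝ)/2) (1/2)),
        (if |ξ 0 - ξ 1| ≤ r then (1:ℝ) else 0) * (if |ξ 1 - ξ 2| ≤ r then (1:ℝ) else 0)
          * (if |ξ 2 - ξ 0| ≤ r then (1:ℝ) else 0))
      = 3 * min r 1 ^ 2 - 2 * min r 1 ^ 3 := by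
  have hmeas : MeasurableSet {ξ : Fin 3 → ℝ | ∀ i j, |ξ i - ξ j| ≤ r} := by
    measurability
  have hnonneg : 0 ≤ min r 1 ^ 2 - 2 * min r 1 ^ 3 / 3 := by
    have := min_le_right r 1
    have := le_min hr zero_le_one
    nlinarith
  simp only [ite_mul_ite_mul_ite_eq_indicator]
  rw [integral_indicator_one hmeas, volume_pi, Measure.restrict_pi_pi, measureReal_def,
    pi_setOf_forall_abs_sub_le _ hr, lintegral_volume_restrict_Icc_sq hr, ENNReal.toReal_mul,
    ENNReal.toReal_ofReal hnonneg]
  norm_num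
  ring

/-- `f₃(r) = ∫_{[-1/2,1/2]^3} 𝟙_{|ξ₁-ξ₂|≤r}𝟙_{|ξ₂-ξ₃|≤r}𝟙_{|ξ₃-ξ₁|≤r} dξ`
equals `3r² - 2r³` for `0 < r < 1` and equals `1` for `r ≥ 1`. -/
theorem stmt11 (r : ℝ) (hr : 0 < r) :
    (r < 1 →
      (∫ ξ in (Set.univ.pi fun _ : Fin 3 => Set.Icc (-(1:ℝ)/2) (1/2)),
        (if |ξ 0 - ξ 1| ≤ r then (1:ℝ) else 0) * (if |ξ 1 - ξ 2| ≤ r then (1:ℝ) else 0)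
          * (if |ξ 2 - ξ 0| ≤ r then (1:ℝ) else 0))
        = 3 * r ^ 2 - 2 * r ^ 3) ∧
    (1 ≤ r →
      (∫ ξ in (Set.univ.pi fun _ : Fin 3 => Set.Icc (-(1:ℝ)/2) (1/2)),
        (if |ξ 0 - ξ 1| ≤ r then (1:ℝ) else 0) * (if |ξ 1 - ξ 2| ≤ r then (1:ℝ) else 0)
          * (if |ξ 2 - ξ 0| ≤ r then (1:ℝ) else 0))
        = 1) := by
  simp only [integral_cube_ite_mul_ite_mul_ite hr.le]
  exact ⟨fun h => by rw [min_eq_left h.le], fun h => by rw [min_eq_right h]; norm_num⟩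
end
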